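/- arXiv:2209.12381 — 3 statements merged into one kernel-verified Lean document; each statement's English description precedes it below -/
import Mathlib

section
/- Let μ be the standard Gaussian measure N(0, I_d) on ℝ^d and let 0 < ε ≤ 1. Then sup{∫_A ‖x‖² μ(dx) : A measurable, μ(A) ≤ ε} ≤ ε·(2d + 3ln(1/ε) + 3). -/
/-!
From `1 + u ≤ eᵘ` one gets `s ≤ L + 3 e^{-L/3} e^{s/3}` for all reals `s, L`. Integrating this over
`A` with `s = ‖x‖²` bounds `∫_A ‖x‖² dμ` by `L μ(A) + 3 e^{-L/3} E_μ[e^{‖x‖²/3}]`, and the Gaussian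
exponential moment is `E_μ[e^{‖x‖²/3}] = 3^{d/2} ≤ e^{2d/3}`. The choice `L = 2d + 3 ln(1/ε)` makes
the second term at most `3ε`.
-/

open MeasureTheory Real
open scoped ENNReal RealInnerProductSpace BigOperators

noncomputable section

/-- `ℝ^d` with the Euclidean norm. -/
abbrev Euc (d : ℕ) := EuclideanSpace ℝ (Fin d)

/-- Density of the Gaussian `N(0, σ²·I_d)` on `ℝ^d`. -/
def gaussDensity (d : ℕ) (σ2 : ℝ) (x : Euc d) : ℝ :=
  (2 * π * σ2) ^ (-(d : ℝ) / 2) * Real.exp (-‖x‖ ^ 2 / (2 * σ2))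

/-- Density `p̃_t = (M_{m_t ♯} P) * φ_{σ_t²}` of the Ornstein-Uhlenbeck (forward DDPM) process at
time `t` started at the probability measure `P`, where `m_t = e^{-t/2}`, `σ_t² = 1 - e^{-t}`. -/
def ouDensity {d : ℕ} (P : Measure (Euc d)) (t : ℝ) (x : Euc d) : ℝ :=
  ∫ y, gaussDensity d (1 - Real.exp (-t)) (x - y) ∂(P.map (fun z => Real.exp (-t / 2) • z))

/-- χ²-divergence `χ²(q‖p) = ∫ q²/p − 1` between densities on `ℝ^d`. -/
def chi2d {d : ℕ} (q p : Euc d → ℝ) : ℝ := (∫ x, q x ^ 2 / p x) - 1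

/-- KL divergence `KL(q‖p) = ∫ q ln(q/p)` between densities on `ℝ^d`. -/
def KLd {d : ℕ} (q p : Euc d → ℝ) : ℝ := ∫ x, q x * Real.log (q x / p x)

/-- Dirichlet form `ℰ_p(f) = ∫ ‖∇f‖² p`. -/
def dirichletForm {d : ℕ} (p f : Euc d → ℝ) : ℝ := ∫ x, ‖gradient f x‖ ^ 2 * p x

/-- `ψ = (q/p) / E_p[(q/p)²]`. -/
def psiFun {d : ℕ} (q p : Euc d → ℝ) (x : Euc d) : ℝ :=
  (q x / p x) / ∫ y, (q y / p y) ^ 2 * p y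

/-- χ²-divergence `χ²(P‖Q) = ∫ (dP/dQ)² dQ − 1` between measures. -/
def chi2M {α : Type*} [MeasurableSpace α] (P Q : Measure α) : ℝ :=
  (∫ x, ((P.rnDeriv Q) x).toReal ^ 2 ∂Q) - 1

/-- Total variation distance between measures. -/
def tvDist {α : Type*} [MeasurableSpace α] (P Q : Measure α) : ℝ :=
  sSup {r : ℝ | ∃ s : Set α, MeasurableSet s ∧ r = |(P s).toReal - (Q s).toReal|}

/-- Orlicz `ψ₂` (subgaussian) norm of a real random variable. -/
def psi2Norm {Ω : Type*} [MeasurableSpace Ω] (P : Measure Ω) (Z : Ω → ℝ) : ℝ :=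
  sInf {t : ℝ | 0 < t ∧ ∫ ω, Real.exp (Z ω ^ 2 / t ^ 2) ∂P ≤ 2}

/-- The standard Gaussian measure `N(0, I_d)` on `ℝ^d`. -/
def stdGaussian (d : ℕ) : Measure (Euc d) :=
  volume.withDensity (fun x => ENNReal.ofReal (gaussDensity d 1 x))

theorem le_add_mul_exp_neg_div_mul_exp_div {a : ℝ} (ha : 0 < a) (s L : ℝ) :
    s ≤ L + a * rexp (-L / a) * rexp (s / a) :=
  calc s = L + a * ((s - L) / a) := by field_simp; ring
    _ ≤ L + a * rexp ((s - L) / a) := by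
        gcongr; linarith [Real.add_one_le_exp ((s - L) / a)]
    _ = L + a * rexp (-L / a) * rexp (s / a) := by
        rw [mul_assoc, ← Real.exp_add]; ring_nf

theorem setIntegral_le_mul_measureReal_add_exp_moment {α : Type*} [MeasurableSpace α]
    {μ : Measure α} {f : α → ℝ} {A : Set α} {a L : ℝ} (ha : 0 < a) (hf : 0 ≤ f)
    (hexp : Integrable (fun x => rexp (f x / a)) μ) (hA : μ A ≠ ∞) :
    ∫ x in A, f x ∂μ ≤ L * μ.real A + a * rexp (-L / a) * ∫ x, rexp (f x / a) ∂μ := by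
  have : IsFiniteMeasure (μ.restrict A) := isFiniteMeasure_restrict.mpr hA
  calc ∫ x in A, f x ∂μ
      ≤ ∫ x in A, (L + a * rexp (-L / a) * rexp (f x / a)) ∂μ :=
        integral_mono_of_nonneg (.of_forall hf)
          ((integrable_const L).add (hexp.integrableOn.const_mul _))
          (.of_forall fun x => le_add_mul_exp_neg_div_mul_exp_div ha (f x) L)
    _ = L * μ.real A + a * rexp (-L / a) * ∫ x in A, rexp (f x / a) ∂μ := by
        rw [integral_add (integrable_const L) (hexp.integrableOn.const_mul _), setIntegral_const,
          integral_const_mul, smul_eq_mul, mul_comm]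
    _ ≤ L * μ.real A + a * rexp (-L / a) * ∫ x, rexp (f x / a) ∂μ := by
        have := setIntegral_le_integral (s := A) hexp (.of_forall fun x => (Real.exp_pos _).le)
        gcongr

theorem three_rpow_half_le_exp {x : ℝ} (hx : 0 ≤ x) : (3 : ℝ) ^ (x / 2) ≤ rexp (2 * x / 3) := by
  rw [Real.rpow_def_of_pos (by norm_num), Real.exp_le_exp]
  nlinarith [Real.log_three_lt_d9]

theorem integrable_exp_neg_mul_sq_norm {V : Type*} [NormedAddCommGroup V] [InnerProductSpace ℝ V]
    [FiniteDimensional ℝ V] [MeasurableSpace V] [BorelSpace V] {b : ℝ} (hb : 0 < b) :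
    Integrable (fun v : V => rexp (-b * ‖v‖ ^ 2)) := by
  refine Integrable.of_integral_ne_zero ?_
  rw [GaussianFourier.integral_rexp_neg_mul_sq_norm hb]
  positivity

section StdGaussian

variable {d : ℕ}

theorem gaussDensity_one_nonneg (x : Euc d) : 0 ≤ gaussDensity d 1 x := by
  unfold gaussDensity; positivity

theorem measurable_ofReal_gaussDensity_one :
    Measurable fun x : Euc d => ENNReal.ofReal (gaussDensity d 1 x) :=
  (by unfold gaussDensity; fun_prop : Continuous (gaussDensity d 1)).measurable.ennreal_ofReal

theorem gaussDensity_one_mul_exp_mul_sq_norm (t : ℝ) (x : Euc d) :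
    gaussDensity d 1 x * rexp (t * ‖x‖ ^ 2)
      = (2 * π) ^ (-(d : ℝ) / 2) * rexp (-(1 / 2 - t) * ‖x‖ ^ 2) := by
  rw [gaussDensity, mul_one, mul_assoc, ← Real.exp_add]
  ring_nf

theorem integral_stdGaussian (f : Euc d → ℝ) :
    ∫ x, f x ∂stdGaussian d = ∫ x, gaussDensity d 1 x * f x := by
  rw [stdGaussian, integral_withDensity_eq_integral_toReal_smul
    measurable_ofReal_gaussDensity_one (.of_forall fun _ => ENNReal.ofReal_lt_top)]
  simp_rw [ENNReal.toReal_ofReal (gaussDensity_one_nonneg _), smul_eq_mul]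

theorem integrable_stdGaussian_iff {f : Euc d → ℝ} :
    Integrable f (stdGaussian d) ↔ Integrable (fun x => gaussDensity d 1 x * f x) := by
  rw [stdGaussian, integrable_withDensity_iff_integrable_smul'
    measurable_ofReal_gaussDensity_one (.of_forall fun _ => ENNReal.ofReal_lt_top)]
  simp_rw [ENNReal.toReal_ofReal (gaussDensity_one_nonneg _), smul_eq_mul]

theorem integrable_exp_mul_sq_norm_stdGaussian {t : ℝ} (ht : t < 1 / 2) :
    Integrable (fun x : Euc d => rexp (t * ‖x‖ ^ 2)) (stdGaussian d) := by
  rw [integrable_stdGaussian_iff]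
  simp_rw [gaussDensity_one_mul_exp_mul_sq_norm]
  exact (integrable_exp_neg_mul_sq_norm (by linarith)).const_mul _

theorem integral_exp_mul_sq_norm_stdGaussian {t : ℝ} (ht : t < 1 / 2) :
    ∫ x, rexp (t * ‖x‖ ^ 2) ∂stdGaussian d = (1 - 2 * t) ^ (-(d : ℝ) / 2) := by
  rw [integral_stdGaussian]
  simp_rw [gaussDensity_one_mul_exp_mul_sq_norm]
  rw [integral_const_mul, GaussianFourier.integral_rexp_neg_mul_sq_norm (by linarith),
    finrank_euclideanSpace, Fintype.card_fin,
    show π / (1 / 2 - t) = 2 * π / (1 - 2 * t) by field_simp,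
    Real.div_rpow (by positivity) (by linarith), neg_div, Real.rpow_neg (by positivity),
    Real.rpow_neg (by linarith)]
  have : (2 * π) ^ ((d : ℝ) / 2) ≠ 0 := by positivity
  field_simp

end StdGaussian

theorem stmt_11_general {d : ℕ} (ε : ℝ) (hε0 : 0 < ε) (hε1 : ε ≤ 1)
    (A : Set (Euc d)) (hAε : stdGaussian d A ≤ ENNReal.ofReal ε) :
    (∫ x in A, ‖x‖ ^ 2 ∂(stdGaussian d)) ≤ ε * (2 * d + 3 * Real.log (1 / ε) + 3) := by
  set L : ℝ := 2 * d + 3 * Real.log (1 / ε)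
  have hL : 0 ≤ L := by
    have : 0 ≤ Real.log (1 / ε) := Real.log_nonneg (by rw [le_div_iff₀ hε0]; linarith)
    positivity
  have hμA : (stdGaussian d).real A ≤ ε := ENNReal.toReal_le_of_le_ofReal hε0.le hAε
  have hexpL : rexp (-L / 3) = rexp (-(2 * d / 3)) * ε := by
    rw [← Real.exp_log hε0, ← Real.exp_add]
    simp only [L, one_div, Real.log_inv]
    ring_nf
  have hthird : (fun x : Euc d => rexp (‖x‖ ^ 2 / 3)) = fun x => rexp (1 / 3 * ‖x‖ ^ 2) := by
    ext x; ring_nf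
  have hmoment : ∫ x, rexp (‖x‖ ^ 2 / 3) ∂stdGaussian d = 3 ^ ((d : ℝ) / 2) := by
    rw [hthird, integral_exp_mul_sq_norm_stdGaussian (by norm_num),
      show (1 : ℝ) - 2 * (1 / 3) = 3⁻¹ by norm_num, Real.inv_rpow (by norm_num),
      ← Real.rpow_neg (by norm_num), neg_div, neg_neg]
  have hconst : rexp (-(2 * d / 3)) * 3 ^ ((d : ℝ) / 2) ≤ 1 := by
    rw [Real.exp_neg, inv_mul_le_one₀ (by positivity)]
    exact three_rpow_half_le_exp d.cast_nonneg
  calc ∫ x in A, ‖x‖ ^ 2 ∂stdGaussian d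
      ≤ L * (stdGaussian d).real A + 3 * rexp (-L / 3) * ∫ x, rexp (‖x‖ ^ 2 / 3) ∂stdGaussian d :=
        setIntegral_le_mul_measureReal_add_exp_moment (by norm_num) (fun x => by positivity)
          (by rw [hthird]; exact integrable_exp_mul_sq_norm_stdGaussian (by norm_num))
          (ne_top_of_le_ne_top ENNReal.ofReal_ne_top hAε)
    _ = L * (stdGaussian d).real A + 3 * ε * (rexp (-(2 * d / 3)) * 3 ^ ((d : ℝ) / 2)) := by
        rw [hmoment, hexpL]; ring
    _ ≤ L * ε + 3 * ε * 1 := by gcongr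
    _ = ε * (2 * d + 3 * Real.log (1 / ε) + 3) := by ring

/-- For the standard Gaussian `μ = N(0,I_d)` and `0 < ε ≤ 1`:
`sup { ∫_A ‖x‖² dμ : μ(A) ≤ ε } ≤ ε (2d + 3 ln(1/ε) + 3)`. -/
theorem stmt_11 {d : ℕ} (ε : ℝ) (hε0 : 0 < ε) (hε1 : ε ≤ 1)
    (A : Set (Euc d)) (hA : MeasurableSet A) (hAε : stdGaussian d A ≤ ENNReal.ofReal ε) :
    (∫ x in A, ‖x‖ ^ 2 ∂(stdGaussian d)) ≤ ε * (2 * d + 3 * Real.log (1 / ε) + 3) :=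
  stmt_11_general ε hε0 hε1 A hAε
end
end

section
/- Let P̃₀ be a probability measure supported on the closed ball B_R(0) ⊂ ℝ^d with R ≥ 1, and for t > 0 let p̃_t = (M_{m_t♯}P̃₀) * φ_{σ_t²} with m_t = e^{−t/2}, σ_t² = 1 − e^{−t}. Then for every t > 0 and every x ∈ ℝ^d: ‖∇² ln p̃_t(x)‖ ≤ R²/σ_t⁴. -/
open MeasureTheory Real
open scoped ENNReal RealInnerProductSpace BigOperators

noncomputable section

/-!
Completing the square in the Gaussian kernel gives
`p̃_t(x) = C · exp (-‖x‖² / 2σ²) · ∫ exp ⟪x, y⟫ dν(y)`, where `ν` is the image under `y ↦ y / σ²`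
of `m_t♯P̃₀` reweighted by `exp (-‖y‖² / 2σ²)`, so `ν` lives on the ball of radius `B = R / σ²`.
Hence `∇² ln p̃_t(x) = -σ⁻² I + Cov(ν_x)`, where `ν_x ∝ exp ⟪x, ·⟫ ν` is the exponentially tilted
measure, whose covariance lies between `0` and `B² I`. As `σ² ≤ 1 ≤ R` gives `σ⁻² ≤ B²`, the
symmetric operator `-σ⁻² I + Cov(ν_x)` has quadratic form bounded in absolute value by
`B² = R² / σ⁴`.
-/

theorem ContinuousLinearMap.opNorm_le_of_isSymmetric {E : Type*} [NormedAddCommGroup E]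
    [InnerProductSpace ℝ E] {T : E →L[ℝ] E} (hT : (T : E →ₗ[ℝ] E).IsSymmetric) {M : ℝ}
    (hM : 0 ≤ M) (h : ∀ u, |⟪T u, u⟫| ≤ M * ‖u‖ ^ 2) : ‖T‖ ≤ M := by
  rw [T.norm_eq_iSup_rayleighQuotient hT]
  refine ciSup_le fun u => ?_
  rcases eq_or_ne u 0 with rfl | hu
  · simpa using hM
  rw [rayleighQuotient, reApplyInnerSelf_apply, RCLike.re_to_real, abs_div, abs_sq,
    div_le_iff₀ (by positivity)]
  exact h u

section LaplaceTransform

variable {E : Type*} [NormedAddCommGroup E] [InnerProductSpace ℝ E]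

theorem exp_inner_le_of_norm_le {B : ℝ} (x : E) {y : E} (hy : ‖y‖ ≤ B) :
    exp ⟪x, y⟫ ≤ exp (‖x‖ * B) :=
  exp_le_exp.2 <| (real_inner_le_norm x y).trans (mul_le_mul_of_nonneg_left hy (norm_nonneg x))

variable [MeasurableSpace E]

def laplaceTransform (ν : Measure E) (x : E) : ℝ := ∫ y, exp ⟪x, y⟫ ∂ν

def laplaceTransformGradient (ν : Measure E) (x : E) : E := ∫ y, exp ⟪x, y⟫ • y ∂ν

def laplaceTransformHessian (ν : Measure E) (x : E) : E →L[ℝ] E :=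
  ∫ y, exp ⟪x, y⟫ • (innerSL ℝ y).smulRight y ∂ν

def tiltedCovariance (ν : Measure E) (x : E) : E →L[ℝ] E :=
  (laplaceTransform ν x)⁻¹ • laplaceTransformHessian ν x -
    (laplaceTransform ν x ^ 2)⁻¹ •
      (innerSL ℝ (laplaceTransformGradient ν x)).smulRight (laplaceTransformGradient ν x)

theorem inner_tiltedCovariance_apply (ν : Measure E) (x u v : E) :
    ⟪tiltedCovariance ν x u, v⟫ =
      (laplaceTransform ν x)⁻¹ * ⟪laplaceTransformHessian ν x u, v⟫ -
        (laplaceTransform ν x ^ 2)⁻¹ *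
          (⟪laplaceTransformGradient ν x, u⟫ * ⟪laplaceTransformGradient ν x, v⟫) := by
  simp [tiltedCovariance, inner_sub_left, real_inner_smul_left]

variable [BorelSpace E] {ν : Measure E} [IsFiniteMeasure ν] {B : ℝ}

theorem integrable_exp_inner_smul {G : Type*} [NormedAddCommGroup G] [NormedSpace ℝ G]
    (hB : ∀ᵐ y ∂ν, ‖y‖ ≤ B) {g : E → G} (hg : AEStronglyMeasurable g ν) {M : ℝ}
    (hgM : ∀ᵐ y ∂ν, ‖g y‖ ≤ M) (x : E) :
    Integrable (fun y => exp ⟪x, y⟫ • g y) ν := by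
  refine Integrable.mono' (integrable_const (exp (‖x‖ * B) * M))
    ((by fun_prop : Continuous fun y => exp ⟪x, y⟫).aestronglyMeasurable.smul hg) ?_
  filter_upwards [hB, hgM] with y hy hgy
  rw [norm_smul, norm_of_nonneg (exp_nonneg _)]
  exact mul_le_mul (exp_inner_le_of_norm_le x hy) hgy (norm_nonneg _) (exp_nonneg _)

theorem integrable_exp_inner (hB : ∀ᵐ y ∂ν, ‖y‖ ≤ B) (x : E) :
    Integrable (fun y => exp ⟪x, y⟫) ν := by
  simpa using integrable_exp_inner_smul hB (g := fun _ => (1 : ℝ)) aestronglyMeasurable_const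
    (M := 1) (Filter.Eventually.of_forall fun _ => norm_one.le) x

theorem integrable_exp_inner_mul_inner (hB : ∀ᵐ y ∂ν, ‖y‖ ≤ B) (x u : E) :
    Integrable (fun y => exp ⟪x, y⟫ * ⟪y, u⟫) ν :=
  integrable_exp_inner_smul hB (g := fun y => ⟪y, u⟫)
    (by fun_prop : Continuous _).aestronglyMeasurable (M := B * ‖u‖)
    (hB.mono fun y hy => (norm_inner_le_norm y u).trans (by gcongr)) x

theorem integrable_exp_inner_mul_inner_mul_inner (hB : ∀ᵐ y ∂ν, ‖y‖ ≤ B) (x u v : E) :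
    Integrable (fun y => exp ⟪x, y⟫ * (⟪y, u⟫ * ⟪y, v⟫)) ν := by
  refine integrable_exp_inner_smul hB (g := fun y => ⟪y, u⟫ * ⟪y, v⟫)
    (by fun_prop : Continuous _).aestronglyMeasurable (M := B * ‖u‖ * (B * ‖v‖)) ?_ x
  filter_upwards [hB] with y hy
  rw [norm_mul]
  have hB0 : 0 ≤ B := (norm_nonneg y).trans hy
  gcongr <;> exact (norm_inner_le_norm _ _).trans (by gcongr)

theorem laplaceTransform_pos [NeZero ν] (hB : ∀ᵐ y ∂ν, ‖y‖ ≤ B) (x : E) :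
    0 < laplaceTransform ν x :=
  integral_exp_pos (integrable_exp_inner hB x)

variable [SecondCountableTopology E]

theorem integrable_exp_inner_smul_smulRight {G : Type*} [NormedAddCommGroup G]
    [NormedSpace ℝ G] (hB : ∀ᵐ y ∂ν, ‖y‖ ≤ B) {g : E → G} (hg : AEStronglyMeasurable g ν)
    {M : ℝ} (hgM : ∀ᵐ y ∂ν, ‖g y‖ ≤ M) (x : E) :
    Integrable (fun y => exp ⟪x, y⟫ • (innerSL ℝ y).smulRight (g y)) ν := by
  refine integrable_exp_inner_smul hB
    ((ContinuousLinearMap.smulRightL ℝ E G).aestronglyMeasurable_comp₂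
      ((innerSL ℝ).continuous.comp_aestronglyMeasurable aestronglyMeasurable_id) hg)
    (M := B * M) ?_ x
  filter_upwards [hB, hgM] with y hy hgy
  change ‖(innerSL ℝ y).smulRight (g y)‖ ≤ B * M
  rw [ContinuousLinearMap.norm_smulRight_apply, innerSL_apply_norm]
  exact mul_le_mul hy hgy (norm_nonneg _) ((norm_nonneg y).trans hy)

theorem hasFDerivAt_integral_exp_inner_smul {G : Type*} [NormedAddCommGroup G]
    [NormedSpace ℝ G] [CompleteSpace G] (hB : ∀ᵐ y ∂ν, ‖y‖ ≤ B) {g : E → G}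
    (hg : AEStronglyMeasurable g ν) {M : ℝ} (hgM : ∀ᵐ y ∂ν, ‖g y‖ ≤ M) (x : E) :
    HasFDerivAt (fun x => ∫ y, exp ⟪x, y⟫ • g y ∂ν)
      (∫ y, exp ⟪x, y⟫ • (innerSL ℝ y).smulRight (g y) ∂ν) x := by
  refine hasFDerivAt_integral_of_dominated_of_fderiv_le
    (F' := fun x y => exp ⟪x, y⟫ • (innerSL ℝ y).smulRight (g y))
    (Metric.ball_mem_nhds x zero_lt_one)
    (Filter.Eventually.of_forall fun z => (integrable_exp_inner_smul hB hg hgM z).1)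
    (integrable_exp_inner_smul hB hg hgM x)
    (integrable_exp_inner_smul_smulRight hB hg hgM x).1 ?_
    (integrable_const (exp ((‖x‖ + 1) * B) * (B * M))) ?_
  · filter_upwards [hB, hgM] with y hy hgy z hz
    have hz : ‖z‖ ≤ ‖x‖ + 1 := by
      linarith [norm_le_norm_add_norm_sub' z x, (mem_ball_iff_norm.1 hz).le]
    have hB0 : 0 ≤ B := (norm_nonneg y).trans hy
    rw [norm_smul, norm_of_nonneg (exp_nonneg _), ContinuousLinearMap.norm_smulRight_apply,
      innerSL_apply_norm]
    refine mul_le_mul ((exp_inner_le_of_norm_le z hy).trans (exp_le_exp.2 (by gcongr)))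
      (mul_le_mul hy hgy (norm_nonneg _) hB0) (by positivity) (exp_nonneg _)
  · refine Filter.Eventually.of_forall fun y z _ => ?_
    convert ((innerSL ℝ y).hasFDerivAt (x := z)).exp.smul_const (g y) using 1
    · simp only [innerSL_apply_apply, real_inner_comm y]
    · ext u
      simp [real_inner_comm y, mul_smul]

variable [CompleteSpace E]

theorem hasGradientAt_laplaceTransform (hB : ∀ᵐ y ∂ν, ‖y‖ ≤ B) (x : E) :
    HasGradientAt (laplaceTransform ν) (laplaceTransformGradient ν x) x := by
  have h := hasFDerivAt_integral_exp_inner_smul hB (g := fun _ => (1 : ℝ))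
    aestronglyMeasurable_const (Filter.Eventually.of_forall fun _ => norm_one.le) x
  have hsmul (y : E) :
      exp ⟪x, y⟫ • (innerSL ℝ y).smulRight (1 : ℝ) = innerSL ℝ (exp ⟪x, y⟫ • y) := by
    ext u
    simp
  rw [hasGradientAt_iff_hasFDerivAt]
  refine (h.congr_fderiv ?_).congr_of_eventuallyEq (Filter.Eventually.of_forall fun z => ?_)
  · simp_rw [hsmul]
    exact (innerSL ℝ).integral_comp_comm
      (integrable_exp_inner_smul hB (g := fun y => y) aestronglyMeasurable_id hB x)
  · simp [laplaceTransform]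

theorem hasFDerivAt_laplaceTransformGradient (hB : ∀ᵐ y ∂ν, ‖y‖ ≤ B) (x : E) :
    HasFDerivAt (laplaceTransformGradient ν) (laplaceTransformHessian ν x) x :=
  hasFDerivAt_integral_exp_inner_smul hB (g := fun y => y) aestronglyMeasurable_id hB x

theorem inner_laplaceTransformGradient (hB : ∀ᵐ y ∂ν, ‖y‖ ≤ B) (x u : E) :
    ⟪laplaceTransformGradient ν x, u⟫ = ∫ y, exp ⟪x, y⟫ * ⟪y, u⟫ ∂ν := by
  rw [laplaceTransformGradient, real_inner_comm,
    ← integral_inner (integrable_exp_inner_smul hB (g := fun y => y) aestronglyMeasurable_id hB x)]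
  simp_rw [real_inner_smul_right, real_inner_comm u]

theorem inner_laplaceTransformHessian_apply (hB : ∀ᵐ y ∂ν, ‖y‖ ≤ B) (x u v : E) :
    ⟪laplaceTransformHessian ν x u, v⟫ = ∫ y, exp ⟪x, y⟫ * (⟪y, u⟫ * ⟪y, v⟫) ∂ν := by
  let L : (E →L[ℝ] E) →L[ℝ] ℝ := (innerSL ℝ v).comp (ContinuousLinearMap.apply ℝ E u)
  rw [real_inner_comm, laplaceTransformHessian, ← show ∀ T, L T = ⟪v, T u⟫ from fun _ => rfl,
    ← L.integral_comp_comm (integrable_exp_inner_smul_smulRight hB (g := fun y => y)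
      aestronglyMeasurable_id hB x)]
  simp [L, real_inner_comm v]

theorem sq_inner_laplaceTransformGradient_le (hB : ∀ᵐ y ∂ν, ‖y‖ ≤ B) (x u : E) :
    ⟪laplaceTransformGradient ν x, u⟫ ^ 2 ≤
      laplaceTransform ν x * ⟪laplaceTransformHessian ν x u, u⟫ := by
  have hquad (a : ℝ) : 0 ≤ laplaceTransform ν x * (a * a) +
      (-2 * ⟪laplaceTransformGradient ν x, u⟫) * a + ⟪laplaceTransformHessian ν x u, u⟫ := by
    have hexp := integrable_exp_inner hB x
    have hint := integrable_exp_inner_mul_inner hB x u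
    calc (0 : ℝ) ≤ ∫ y, exp ⟪x, y⟫ * (⟪y, u⟫ - a) ^ 2 ∂ν :=
          integral_nonneg fun y => by positivity
      _ = ∫ y, (exp ⟪x, y⟫ * (a * a) + (-2 * a) * (exp ⟪x, y⟫ * ⟪y, u⟫) +
          exp ⟪x, y⟫ * (⟪y, u⟫ * ⟪y, u⟫)) ∂ν := by
          congr 1
          ext y
          ring
      _ = _ := by
        rw [integral_add ?_ (integrable_exp_inner_mul_inner_mul_inner hB x u u),
          integral_add (hexp.mul_const _) (hint.const_mul _), integral_mul_const,
          integral_const_mul, inner_laplaceTransformGradient hB,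
          inner_laplaceTransformHessian_apply hB, laplaceTransform]
        · ring
        · exact (hexp.mul_const _).add (hint.const_mul _)
  have := discrim_le_zero hquad
  rw [discrim] at this
  linarith

theorem inner_laplaceTransformHessian_self_le (hB : ∀ᵐ y ∂ν, ‖y‖ ≤ B) (x u : E) :
    ⟪laplaceTransformHessian ν x u, u⟫ ≤ B ^ 2 * ‖u‖ ^ 2 * laplaceTransform ν x := by
  rw [inner_laplaceTransformHessian_apply hB, laplaceTransform, ← integral_const_mul]
  refine integral_mono_ae (integrable_exp_inner_mul_inner_mul_inner hB x u u)
    ((integrable_exp_inner hB x).const_mul _) ?_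
  filter_upwards [hB] with y hy
  have hyu : |⟪y, u⟫| ≤ B * ‖u‖ := (abs_real_inner_le_norm y u).trans (by gcongr)
  have : ⟪y, u⟫ * ⟪y, u⟫ ≤ B ^ 2 * ‖u‖ ^ 2 := by
    rw [← sq, ← sq_abs, ← mul_pow]
    exact pow_le_pow_left₀ (abs_nonneg _) hyu 2
  nlinarith [exp_pos ⟪x, y⟫]

theorem hasFDerivAt_inv_laplaceTransform_smul_gradient [NeZero ν] (hB : ∀ᵐ y ∂ν, ‖y‖ ≤ B)
    (x : E) :
    HasFDerivAt (fun x => (laplaceTransform ν x)⁻¹ • laplaceTransformGradient ν x)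
      (tiltedCovariance ν x) x := by
  have hinv := (hasDerivAt_inv (laplaceTransform_pos hB x).ne').comp_hasFDerivAt x
    (hasGradientAt_laplaceTransform hB x).hasFDerivAt
  refine (hinv.smul (hasFDerivAt_laplaceTransformGradient hB x)).congr_fderiv ?_
  ext u
  simp [tiltedCovariance, sub_eq_add_neg, mul_smul]

theorem tiltedCovariance_isSymmetric (hB : ∀ᵐ y ∂ν, ‖y‖ ≤ B) (x : E) :
    (tiltedCovariance ν x : E →ₗ[ℝ] E).IsSymmetric := by
  intro u v
  simp only [ContinuousLinearMap.coe_coe]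
  rw [← real_inner_comm u, inner_tiltedCovariance_apply, inner_tiltedCovariance_apply,
    inner_laplaceTransformHessian_apply hB, inner_laplaceTransformHessian_apply hB]
  simp only [mul_comm ⟪_, u⟫ ⟪_, v⟫]

theorem inner_tiltedCovariance_self_mem_Icc [NeZero ν] (hB : ∀ᵐ y ∂ν, ‖y‖ ≤ B) (x u : E) :
    ⟪tiltedCovariance ν x u, u⟫ ∈ Set.Icc 0 (B ^ 2 * ‖u‖ ^ 2) := by
  have hL := laplaceTransform_pos hB x
  have hCS := sq_inner_laplaceTransformGradient_le hB x u
  have hS := inner_laplaceTransformHessian_self_le hB x u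
  rw [inner_tiltedCovariance_apply, ← sq]
  constructor
  · rw [sub_nonneg, ← div_eq_inv_mul, ← div_eq_inv_mul, div_le_div_iff₀ (by positivity) hL]
    nlinarith
  · have : 0 ≤ (laplaceTransform ν x ^ 2)⁻¹ * ⟪laplaceTransformGradient ν x, u⟫ ^ 2 := by
      positivity
    have : (laplaceTransform ν x)⁻¹ * ⟪laplaceTransformHessian ν x u, u⟫ ≤ B ^ 2 * ‖u‖ ^ 2 := by
      rwa [← div_eq_inv_mul, div_le_iff₀ hL]
    linarith

theorem hasGradientAt_log_gaussian_mul_laplaceTransform [NeZero ν] (hB : ∀ᵐ y ∂ν, ‖y‖ ≤ B)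
    {C : ℝ} (hC : 0 < C) (s : ℝ) (x : E) :
    HasGradientAt (fun y => log (C * exp (-‖y‖ ^ 2 / (2 * s)) * laplaceTransform ν y))
      (-s⁻¹ • x + (laplaceTransform ν x)⁻¹ • laplaceTransformGradient ν x) x := by
  have hlog (y : E) : log (C * exp (-‖y‖ ^ 2 / (2 * s)) * laplaceTransform ν y) =
      log C + -(2 * s)⁻¹ * ‖y‖ ^ 2 + log (laplaceTransform ν y) := by
    rw [log_mul (by positivity) (laplaceTransform_pos hB y).ne', log_mul hC.ne' (exp_pos _).ne',
      log_exp]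
    ring
  have h := ((hasFDerivAt_const (log C) x).add
    ((hasStrictFDerivAt_norm_sq x).hasFDerivAt.const_mul (-(2 * s)⁻¹))).add
    ((hasGradientAt_laplaceTransform hB x).hasFDerivAt.log (laplaceTransform_pos hB x).ne')
  rw [hasGradientAt_iff_hasFDerivAt]
  refine (h.congr_fderiv ?_).congr_of_eventuallyEq (Filter.Eventually.of_forall hlog)
  ext u
  simp only [mul_inv_rev, neg_smul, zero_add, add_apply, neg_apply, smul_apply,
    coe_innerSL_apply, nsmul_eq_mul, Nat.cast_ofNat, smul_eq_mul,
    InnerProductSpace.toDual_apply_apply, map_add, map_neg, map_smul, add_left_inj, neg_inj]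
  ring

theorem norm_fderiv_gradient_log_gaussian_mul_laplaceTransform_le [NeZero ν]
    (hB : ∀ᵐ y ∂ν, ‖y‖ ≤ B) {C s : ℝ} (hC : 0 < C) (hs : 0 ≤ s) (hsB : s⁻¹ ≤ B ^ 2) (x : E) :
    ‖fderiv ℝ (gradient fun y => log (C * exp (-‖y‖ ^ 2 / (2 * s)) * laplaceTransform ν y)) x‖
      ≤ B ^ 2 := by
  have hgrad : (gradient fun y => log (C * exp (-‖y‖ ^ 2 / (2 * s)) * laplaceTransform ν y)) =
      fun y => -s⁻¹ • y + (laplaceTransform ν y)⁻¹ • laplaceTransformGradient ν y :=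
    funext fun y => (hasGradientAt_log_gaussian_mul_laplaceTransform hB hC s y).gradient
  have hT : HasFDerivAt
      (fun y => -s⁻¹ • y + (laplaceTransform ν y)⁻¹ • laplaceTransformGradient ν y)
      (-s⁻¹ • ContinuousLinearMap.id ℝ E + tiltedCovariance ν x) x :=
    ((hasFDerivAt_id x).const_smul (-s⁻¹)).add (hasFDerivAt_inv_laplaceTransform_smul_gradient hB x)
  rw [hgrad, hT.fderiv]
  refine ContinuousLinearMap.opNorm_le_of_isSymmetric (fun u v => ?_) (sq_nonneg B) fun u => ?_
  · have := tiltedCovariance_isSymmetric hB x u v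
    simp only [ContinuousLinearMap.coe_coe] at this ⊢
    simp [inner_add_left, inner_add_right, real_inner_smul_left, real_inner_smul_right, this]
  · obtain ⟨h0, h1⟩ := inner_tiltedCovariance_self_mem_Icc hB x u
    have : 0 ≤ s⁻¹ * ‖u‖ ^ 2 := by positivity
    simp only [add_apply, smul_apply, ContinuousLinearMap.id_apply, inner_add_left,
      real_inner_smul_left, real_inner_self_eq_norm_sq]
    rw [abs_le]
    constructor <;> nlinarith

end LaplaceTransform

theorem ae_norm_le_map_const_smul {E : Type*} [NormedAddCommGroup E] [NormedSpace ℝ E]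
    [MeasurableSpace E] [BorelSpace E] {μ : Measure E} {c R : ℝ} (hc : |c| ≤ 1)
    (hμ : ∀ᵐ z ∂μ, ‖z‖ ≤ R) : ∀ᵐ y ∂μ.map (fun z => c • z), ‖y‖ ≤ R := by
  rw [ae_map_iff (by fun_prop) (measurableSet_le (by fun_prop) (by fun_prop))]
  filter_upwards [hμ] with z hz
  rw [norm_smul, norm_eq_abs]
  exact (mul_le_of_le_one_left (norm_nonneg z) hc).trans hz

section GaussianTilt

variable {E : Type*} [NormedAddCommGroup E] [InnerProductSpace ℝ E] [MeasurableSpace E]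

def gaussianTilt (μ : Measure E) (s : ℝ) : Measure E :=
  (μ.withDensity fun y => ENNReal.ofReal (exp (-‖y‖ ^ 2 / (2 * s)))).map (fun y => s⁻¹ • y)

theorem isFiniteMeasure_gaussianTilt (μ : Measure E) [IsFiniteMeasure μ] {s : ℝ} (hs : 0 ≤ s) :
    IsFiniteMeasure (gaussianTilt μ s) := by
  have : IsFiniteMeasure (μ.withDensity fun y => ENNReal.ofReal (exp (-‖y‖ ^ 2 / (2 * s)))) :=
    isFiniteMeasure_withDensity_ofReal <| HasFiniteIntegral.of_bounded (C := 1) <|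
      Filter.Eventually.of_forall fun y => by
        rw [norm_of_nonneg (exp_nonneg _), exp_le_one_iff, neg_div]
        exact neg_nonpos.2 (by positivity)
  unfold gaussianTilt
  infer_instance

variable [BorelSpace E]

instance (μ : Measure E) [NeZero μ] (s : ℝ) : NeZero (gaussianTilt μ s) := by
  refine ⟨fun h => NeZero.ne μ ?_⟩
  rw [gaussianTilt, Measure.map_eq_zero_iff (by fun_prop), withDensity_eq_zero_iff (by fun_prop)]
    at h
  have hF : ∀ᵐ y ∂μ, False := h.mono fun y hy => (ENNReal.ofReal_pos.2 (exp_pos _)).ne' hy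
  exact ae_eq_bot.1 (Filter.eventually_false_iff_eq_bot.1 hF)

theorem ae_norm_le_gaussianTilt {μ : Measure E} {R s : ℝ} (hs : 0 < s)
    (hμ : ∀ᵐ y ∂μ, ‖y‖ ≤ R) : ∀ᵐ y ∂gaussianTilt μ s, ‖y‖ ≤ R / s := by
  rw [gaussianTilt, ae_map_iff (by fun_prop) (measurableSet_le (by fun_prop) (by fun_prop))]
  filter_upwards [(withDensity_absolutelyContinuous μ _).ae_le hμ] with y hy
  rw [norm_smul, norm_inv, norm_of_nonneg hs.le, inv_mul_eq_div]
  gcongr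

end GaussianTilt

theorem integral_gaussDensity_sub {d : ℕ} (μ : Measure (Euc d)) (s : ℝ) (x : Euc d) :
    ∫ y, gaussDensity d s (x - y) ∂μ =
      (2 * π * s) ^ (-(d : ℝ) / 2) * exp (-‖x‖ ^ 2 / (2 * s)) *
        laplaceTransform (gaussianTilt μ s) x := by
  rw [laplaceTransform, gaussianTilt, integral_map (by fun_prop) (by fun_prop),
    integral_withDensity_eq_integral_toReal_smul (by fun_prop)
      (Filter.Eventually.of_forall fun _ => ENNReal.ofReal_lt_top), ← integral_const_mul]
  congr 1
  ext y
  rw [gaussDensity, ENNReal.toReal_ofReal (exp_nonneg _), smul_eq_mul, mul_assoc _ (exp _),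
    ← exp_add, ← exp_add, norm_sub_sq_real, real_inner_smul_right]
  congr 2
  ring

/-- Let `P̃₀` be a probability measure supported on `B_R(0) ⊆ ℝ^d` with `R ≥ 1`,
and let `p̃_t` be the forward OU density. Then for all `t > 0` and `x`:
`‖∇² ln p̃_t(x)‖ ≤ R²/σ_t⁴`. -/
theorem stmt_14 {d : ℕ} (P : Measure (Euc d)) [IsProbabilityMeasure P]
    (R : ℝ) (hR : 1 ≤ R)
    (hsupp : P (Metric.closedBall 0 R)ᶜ = 0)
    (t : ℝ) (ht : 0 < t) (x : Euc d) :
    ‖fderiv ℝ (gradient (fun y => Real.log (ouDensity P t y))) x‖ ≤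
      R ^ 2 / (1 - Real.exp (-t)) ^ 2 := by
  set σ2 := 1 - exp (-t)
  have hσ2 : 0 < σ2 := sub_pos.2 (exp_lt_one_iff.2 (neg_neg_of_pos ht))
  have hσ2_le : σ2 ≤ 1 := sub_le_self _ (exp_nonneg _)
  set μ := P.map fun z => exp (-t / 2) • z
  have : IsProbabilityMeasure μ := Measure.isProbabilityMeasure_map (by fun_prop)
  have := isFiniteMeasure_gaussianTilt μ hσ2.le
  have hP : ∀ᵐ z ∂P, ‖z‖ ≤ R :=
    Filter.eventually_of_mem (mem_ae_iff.2 hsupp) fun z hz => mem_closedBall_zero_iff.1 hz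
  have hμ : ∀ᵐ y ∂μ, ‖y‖ ≤ R :=
    ae_norm_le_map_const_smul (by rw [abs_exp, exp_le_one_iff]; linarith) hP
  have hdens : (fun y => log (ouDensity P t y)) = fun y =>
      log ((2 * π * σ2) ^ (-(d : ℝ) / 2) * exp (-‖y‖ ^ 2 / (2 * σ2)) *
        laplaceTransform (gaussianTilt μ σ2) y) :=
    funext fun y => by rw [ouDensity, integral_gaussDensity_sub]
  have hσ2B : σ2⁻¹ ≤ (R / σ2) ^ 2 := by
    rw [div_pow, le_div_iff₀ (by positivity), inv_mul_eq_div, sq, mul_div_cancel_right₀ _ hσ2.ne']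
    nlinarith
  rw [hdens, ← div_pow]
  exact norm_fderiv_gradient_log_gaussian_mul_laplaceTransform_le
    (ae_norm_le_gaussianTilt hσ2 hμ) (by positivity) hσ2.le hσ2B x
end
end

section
/- Let P̃₀ be a probability measure supported on the closed ball B_R(0) ⊂ ℝ^d, let T > 0, and let p̃_T = (M_{e^{−T/2}♯}P̃₀) * φ_{1−e^{−T}} be the forward density at time T. Then χ²(N(0, (1−e^{−T})I_d) ‖ p̃_T) ≤ exp(R²e^{−T}/(1 − e^{−T})). In particular, for 0 < ε < 1/2 and T ≥ max{ln(4R²/ε²), 1}, one has χ²(N(0,(1−e^{−T})I_d) ‖ p̃_T) ≤ ε². -/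
open MeasureTheory Real
open scoped ENNReal RealInnerProductSpace BigOperators

noncomputable section

/-! Write `p̃_T(x) = ∫ φ(x - y) dμ(y)`, where `μ` is the law of `e^{-T/2} X₀` for `X₀ ∼ P̃₀`,
supported in the ball of radius `e^{-T/2} R`. Jensen's inequality for `t ↦ 1/t` gives
`1 / p̃_T(x) ≤ ∫ 1 / φ(x - y) dμ(y)`, so after Tonelli, `∫ φ² / p̃_T` is at most the `μ`-average
of `∫ φ(x)² / φ(x - y) dx`. For Gaussians with equal covariance `s I_d` the parallelogram law gives
`φ(x)² / φ(x - y) = φ(x + y) e^{‖y‖²/s}`, so this inner integral is `e^{‖y‖²/s} ≤ e^{R² e^{-T}/s}`.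
The second claim then follows from `|e^X - 1| ≤ 2|X|` for `|X| ≤ 1`. -/

section Jensen

variable {α : Type*} [MeasurableSpace α] {μ : Measure α}

theorem inv_lintegral_le_lintegral_inv [IsProbabilityMeasure μ] {f : α → ℝ≥0∞}
    (hf : AEMeasurable f μ) (h0 : ∀ᵐ a ∂μ, f a ≠ 0) (htop : ∀ᵐ a ∂μ, f a ≠ ∞) :
    (∫⁻ a, f a ∂μ)⁻¹ ≤ ∫⁻ a, (f a)⁻¹ ∂μ := by
  have hprod : ∫⁻ a, f a ^ (1 / 2 : ℝ) * f a ^ (-(1 / 2) : ℝ) ∂μ = 1 := by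
    rw [lintegral_congr_ae (g := fun _ ↦ 1), lintegral_const, measure_univ, one_mul]
    filter_upwards [h0, htop] with a ha0 hatop
    rw [← ENNReal.rpow_add _ _ ha0 hatop, add_neg_cancel, ENNReal.rpow_zero]
  have hcs : 1 ≤ (∫⁻ a, f a ∂μ) ^ (1 / 2 : ℝ) * (∫⁻ a, (f a)⁻¹ ∂μ) ^ (1 / 2 : ℝ) := by
    have h := ENNReal.lintegral_mul_le_Lp_mul_Lq μ Real.HolderConjugate.two_two
      (hf.pow_const (1 / 2 : ℝ)) (hf.pow_const (-(1 / 2) : ℝ))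
    simp only [Pi.mul_apply, hprod, ← ENNReal.rpow_mul] at h
    norm_num [ENNReal.rpow_neg_one] at h ⊢
    exact h
  rw [← ENNReal.mul_rpow_of_nonneg _ _ (by norm_num), ← ENNReal.one_rpow (1 / 2 : ℝ),
    ENNReal.rpow_le_rpow_iff (by norm_num)] at hcs
  rwa [ENNReal.inv_le_iff_le_mul (fun h ha ↦ by simp [h, ha] at hcs)
    (fun h ha ↦ by simp [h, ha] at hcs)]

theorem ofReal_inv_integral_le_lintegral_inv [IsProbabilityMeasure μ] {g : α → ℝ}
    (hg : Integrable g μ) (hpos : ∀ᵐ a ∂μ, 0 < g a) :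
    ENNReal.ofReal (∫ a, g a ∂μ)⁻¹ ≤ ∫⁻ a, ENNReal.ofReal (g a)⁻¹ ∂μ :=
  calc ENNReal.ofReal (∫ a, g a ∂μ)⁻¹
      ≤ (ENNReal.ofReal (∫ a, g a ∂μ))⁻¹ := ENNReal.ofReal_inv_le
    _ = (∫⁻ a, ENNReal.ofReal (g a) ∂μ)⁻¹ := by
      rw [ofReal_integral_eq_lintegral_ofReal hg (hpos.mono fun _ ha ↦ ha.le)]
    _ ≤ ∫⁻ a, (ENNReal.ofReal (g a))⁻¹ ∂μ :=
      inv_lintegral_le_lintegral_inv hg.1.aemeasurable.ennreal_ofReal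
        (hpos.mono fun _ ha ↦ (ENNReal.ofReal_pos.2 ha).ne')
        (ae_of_all _ fun _ ↦ ENNReal.ofReal_ne_top)
    _ = ∫⁻ a, ENNReal.ofReal (g a)⁻¹ ∂μ :=
      lintegral_congr_ae (hpos.mono fun _ ha ↦ (ENNReal.ofReal_inv_of_pos ha).symm)

theorem integral_le_of_lintegral_ofReal_le {f : α → ℝ} (hf : ∀ᵐ a ∂μ, 0 ≤ f a) {B : ℝ}
    (hB : 0 ≤ B) (h : ∫⁻ a, ENNReal.ofReal (f a) ∂μ ≤ ENNReal.ofReal B) : ∫ a, f a ∂μ ≤ B :=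
  calc ∫ a, f a ∂μ ≤ ‖∫ a, f a ∂μ‖ := Real.le_norm_self _
    _ ≤ (∫⁻ a, ENNReal.ofReal ‖f a‖ ∂μ).toReal := norm_integral_le_lintegral_norm f
    _ = (∫⁻ a, ENNReal.ofReal (f a) ∂μ).toReal := by
      rw [lintegral_congr_ae (hf.mono fun a ha ↦ by rw [Real.norm_of_nonneg ha])]
    _ ≤ B := ENNReal.toReal_le_of_le_ofReal hB h

end Jensen

section Gaussian

variable {d : ℕ} {s : ℝ}

theorem gaussDensity_pos (hs : 0 < s) (x : Euc d) : 0 < gaussDensity d s x := by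
  unfold gaussDensity
  positivity

theorem gaussDensity_le (hs : 0 ≤ s) (x : Euc d) :
    gaussDensity d s x ≤ (2 * π * s) ^ (-(d : ℝ) / 2) :=
  mul_le_of_le_one_right (by positivity)
    (Real.exp_le_one_iff.2 (div_nonpos_of_nonpos_of_nonneg (by simp) (by positivity)))

@[fun_prop]
theorem continuous_gaussDensity : Continuous (gaussDensity d s) := by
  unfold gaussDensity
  fun_prop

theorem gaussDensity_add_mul_gaussDensity_sub (x y : Euc d) :
    gaussDensity d s (x + y) * gaussDensity d s (x - y) =
      gaussDensity d s x ^ 2 * Real.exp (-‖y‖ ^ 2 / s) := by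
  have hexp : -‖x + y‖ ^ 2 / (2 * s) + -‖x - y‖ ^ 2 / (2 * s) =
      -‖x‖ ^ 2 / (2 * s) + -‖x‖ ^ 2 / (2 * s) + -‖y‖ ^ 2 / s := by
    linear_combination (-1 / (2 * s)) * parallelogram_law_with_norm ℝ x y
  simp only [gaussDensity]
  rw [mul_mul_mul_comm, ← Real.exp_add, hexp, Real.exp_add, Real.exp_add]
  ring

theorem integral_gaussDensity (hs : 0 < s) : ∫ x, gaussDensity d s x = 1 := by
  have hb : 0 < 1 / (2 * s) := by positivity
  have hexp (x : Euc d) : -‖x‖ ^ 2 / (2 * s) = -(1 / (2 * s)) * ‖x‖ ^ 2 := by ring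
  simp only [gaussDensity, integral_const_mul, hexp,
    GaussianFourier.integral_rexp_neg_mul_sq_norm hb, finrank_euclideanSpace_fin]
  rw [show π / (1 / (2 * s)) = 2 * π * s by field_simp, ← Real.rpow_add (by positivity),
    neg_div, neg_add_cancel, Real.rpow_zero]

theorem lintegral_ofReal_gaussDensity (hs : 0 < s) :
    ∫⁻ x, ENNReal.ofReal (gaussDensity d s x) = 1 := by
  have hint : Integrable (gaussDensity d s) :=
    Integrable.of_integral_ne_zero (by simp [integral_gaussDensity hs])
  rw [← ofReal_integral_eq_lintegral_ofReal hint (ae_of_all _ fun x ↦ (gaussDensity_pos hs x).le),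
    integral_gaussDensity hs, ENNReal.ofReal_one]

theorem lintegral_gaussDensity_sq_div_gaussDensity_sub (hs : 0 < s) (y : Euc d) :
    ∫⁻ x, ENNReal.ofReal (gaussDensity d s x ^ 2 / gaussDensity d s (x - y)) =
      ENNReal.ofReal (Real.exp (‖y‖ ^ 2 / s)) := by
  have hratio (x : Euc d) : gaussDensity d s x ^ 2 / gaussDensity d s (x - y) =
      gaussDensity d s (x + y) * Real.exp (‖y‖ ^ 2 / s) := by
    rw [div_eq_iff (gaussDensity_pos hs _).ne', mul_right_comm,
      gaussDensity_add_mul_gaussDensity_sub, mul_assoc, ← Real.exp_add, neg_div,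
      neg_add_cancel, Real.exp_zero, mul_one]
  simp only [hratio, ENNReal.ofReal_mul (gaussDensity_pos hs _).le]
  rw [lintegral_mul_const' _ _ ENNReal.ofReal_ne_top,
    lintegral_add_right_eq_self (fun x ↦ ENNReal.ofReal (gaussDensity d s x)),
    lintegral_ofReal_gaussDensity hs, one_mul]

theorem integral_gaussDensity_sq_div_mixture_le (μ : Measure (Euc d)) [IsProbabilityMeasure μ]
    (hs : 0 < s) {ρ : ℝ} (hμ : ∀ᵐ y ∂μ, ‖y‖ ≤ ρ) :
    ∫ x, gaussDensity d s x ^ 2 / ∫ y, gaussDensity d s (x - y) ∂μ ≤ Real.exp (ρ ^ 2 / s) := by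
  have hjensen (x : Euc d) :
      ENNReal.ofReal (gaussDensity d s x ^ 2 / ∫ y, gaussDensity d s (x - y) ∂μ) ≤
        ∫⁻ y, ENNReal.ofReal (gaussDensity d s x ^ 2 / gaussDensity d s (x - y)) ∂μ := by
    have hint : Integrable (fun y ↦ gaussDensity d s (x - y)) μ :=
      .of_bound (by fun_prop) _ (ae_of_all _ fun y ↦ by
        rw [Real.norm_of_nonneg (gaussDensity_pos hs _).le]
        exact gaussDensity_le hs.le _)
    calc ENNReal.ofReal (gaussDensity d s x ^ 2 / ∫ y, gaussDensity d s (x - y) ∂μ)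
        = ENNReal.ofReal (gaussDensity d s x ^ 2) *
            ENNReal.ofReal (∫ y, gaussDensity d s (x - y) ∂μ)⁻¹ := by
          rw [div_eq_mul_inv, ENNReal.ofReal_mul (sq_nonneg _)]
      _ ≤ ENNReal.ofReal (gaussDensity d s x ^ 2) *
            ∫⁻ y, ENNReal.ofReal (gaussDensity d s (x - y))⁻¹ ∂μ := by
          gcongr
          exact ofReal_inv_integral_le_lintegral_inv hint
            (ae_of_all _ fun y ↦ gaussDensity_pos hs _)
      _ = ∫⁻ y, ENNReal.ofReal (gaussDensity d s x ^ 2 / gaussDensity d s (x - y)) ∂μ := by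
          rw [← lintegral_const_mul' _ _ ENNReal.ofReal_ne_top]
          simp only [div_eq_mul_inv, ENNReal.ofReal_mul (sq_nonneg _)]
  have hmeas : AEMeasurable (Function.uncurry fun (x y : Euc d) ↦
      ENNReal.ofReal (gaussDensity d s x ^ 2 / gaussDensity d s (x - y))) (volume.prod μ) := by
    fun_prop
  refine integral_le_of_lintegral_ofReal_le (ae_of_all _ fun x ↦ div_nonneg (sq_nonneg _)
    (integral_nonneg fun y ↦ (gaussDensity_pos hs _).le)) (Real.exp_pos _).le ?_
  calc ∫⁻ x, ENNReal.ofReal (gaussDensity d s x ^ 2 / ∫ y, gaussDensity d s (x - y) ∂μ)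
      ≤ ∫⁻ x, ∫⁻ y, ENNReal.ofReal (gaussDensity d s x ^ 2 / gaussDensity d s (x - y)) ∂μ :=
        lintegral_mono hjensen
    _ = ∫⁻ y, (∫⁻ x, ENNReal.ofReal (gaussDensity d s x ^ 2 / gaussDensity d s (x - y))) ∂μ :=
        lintegral_lintegral_swap hmeas
    _ = ∫⁻ y, ENNReal.ofReal (Real.exp (‖y‖ ^ 2 / s)) ∂μ := by
        simp only [lintegral_gaussDensity_sq_div_gaussDensity_sub hs]
    _ ≤ ∫⁻ _, ENNReal.ofReal (Real.exp (ρ ^ 2 / s)) ∂μ :=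
        lintegral_mono_ae (hμ.mono fun y hy ↦ ENNReal.ofReal_le_ofReal (by gcongr))
    _ = ENNReal.ofReal (Real.exp (ρ ^ 2 / s)) := by simp

end Gaussian

theorem one_sub_exp_neg_pos {t : ℝ} (ht : 0 < t) : 0 < 1 - Real.exp (-t) :=
  sub_pos.2 (Real.exp_lt_one_iff.2 (neg_neg_of_pos ht))

theorem integral_gaussDensity_sq_div_ouDensity_le {d : ℕ} (P : Measure (Euc d))
    [IsProbabilityMeasure P] {R t : ℝ} (hsupp : P (Metric.closedBall 0 R)ᶜ = 0) (ht : 0 < t) :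
    ∫ x, gaussDensity d (1 - Real.exp (-t)) x ^ 2 / ouDensity P t x ≤
      Real.exp (R ^ 2 * Real.exp (-t) / (1 - Real.exp (-t))) := by
  have hm : Measurable fun z : Euc d ↦ Real.exp (-t / 2) • z := by fun_prop
  have := Measure.isProbabilityMeasure_map (μ := P) hm.aemeasurable
  have hμ : ∀ᵐ y ∂P.map fun z ↦ Real.exp (-t / 2) • z, ‖y‖ ≤ Real.exp (-t / 2) * R := by
    rw [ae_map_iff hm.aemeasurable (measurableSet_le measurable_norm measurable_const)]
    filter_upwards [mem_ae_iff.2 hsupp] with z hz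
    rw [norm_smul, Real.norm_of_nonneg (Real.exp_pos _).le]
    exact mul_le_mul_of_nonneg_left (mem_closedBall_zero_iff.1 hz) (Real.exp_pos _).le
  calc _ ≤ Real.exp ((Real.exp (-t / 2) * R) ^ 2 / (1 - Real.exp (-t))) :=
        integral_gaussDensity_sq_div_mixture_le _ (one_sub_exp_neg_pos ht) hμ
    _ = _ := by rw [mul_pow, sq (Real.exp _), ← Real.exp_add, add_halves, mul_comm]

theorem sq_mul_exp_neg_div_one_sub_exp_neg_le {R ε T : ℝ} (hε : 0 < ε) (hT : 1 ≤ T)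
    (hTlog : Real.log (4 * R ^ 2 / ε ^ 2) ≤ T) :
    R ^ 2 * Real.exp (-T) / (1 - Real.exp (-T)) ≤ ε ^ 2 / 2 := by
  have hhalf : Real.exp (-T) < 1 / 2 :=
    (Real.exp_le_exp.2 (neg_le_neg hT)).trans_lt Real.exp_neg_one_lt_half
  have hexpT : 4 * R ^ 2 ≤ ε ^ 2 * Real.exp T := by
    rw [← div_le_iff₀' (by positivity)]
    exact (Real.le_exp_log _).trans (Real.exp_le_exp.2 hTlog)
  have hnum : R ^ 2 * Real.exp (-T) ≤ ε ^ 2 / 4 := by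
    rw [Real.exp_neg, ← div_eq_mul_inv, div_le_iff₀ (Real.exp_pos T)]
    linarith
  rw [div_le_iff₀ (by linarith)]
  nlinarith

/-- Let `P̃₀` be a probability measure supported on `B_R(0) ⊆ ℝ^d`, `T > 0`, and
`p̃_T` the forward OU density at time `T`. Then
`χ²(N(0,(1−e^{−T})I_d) ‖ p̃_T) ≤ exp(R²e^{−T}/(1−e^{−T}))`; in particular, for `0 < ε < 1/2`
and `T ≥ max (ln(4R²/ε²)) 1`, `χ²(N(0,(1−e^{−T})I_d) ‖ p̃_T) ≤ ε²`. -/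
theorem stmt_15 {d : ℕ} (P : Measure (Euc d)) [IsProbabilityMeasure P]
    (R : ℝ) (hsupp : P (Metric.closedBall 0 R)ᶜ = 0)
    (T : ℝ) (hT : 0 < T) :
    ((∫ x, gaussDensity d (1 - Real.exp (-T)) x ^ 2 / ouDensity P T x) - 1 ≤
        Real.exp (R ^ 2 * Real.exp (-T) / (1 - Real.exp (-T))))
    ∧ ∀ ε : ℝ, 0 < ε → ε < 1 / 2 → max (Real.log (4 * R ^ 2 / ε ^ 2)) 1 ≤ T →
        (∫ x, gaussDensity d (1 - Real.exp (-T)) x ^ 2 / ouDensity P T x) - 1 ≤ ε ^ 2 := by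
  have hbound := integral_gaussDensity_sq_div_ouDensity_le P hsupp hT
  refine ⟨by linarith, fun ε hε hε2 hmax ↦ ?_⟩
  set X := R ^ 2 * Real.exp (-T) / (1 - Real.exp (-T))
  have hX : X ≤ ε ^ 2 / 2 := sq_mul_exp_neg_div_one_sub_exp_neg_le hε
    ((le_max_right _ _).trans hmax) ((le_max_left _ _).trans hmax)
  have hX0 : 0 ≤ X := div_nonneg (by positivity) (one_sub_exp_neg_pos hT).le
  have hexp := Real.abs_exp_sub_one_le (x := X) (by rw [abs_of_nonneg hX0]; nlinarith)
  rw [abs_of_nonneg hX0] at hexp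
  linarith [le_abs_self (Real.exp X - 1)]
end
end
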